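/- For distinct positive integers m and n, the smallest positive integer k lying in the ideal of ℤ[x] generated by Φ_m(x) and Φ_n(x) is: k = p if {m,n} = {d, d·p^t} for some d, prime p, and t ≥ 1; and k = 1 otherwise. -/

import Mathlib

/-!
If `{m, n} = {d, d * p ^ t}` with `t ≥ 1`, put `r = d * p ^ (t - 1)`: then `Φ_{r * p}` divides
`∑_{i < p} X ^ (r * i)`, which is `≡ p` modulo `Φ_d` because `X ^ r ≡ 1`; so `p` lies in the ideal.
Both polynomials vanish at a primitive root of unity in characteristic `p` whose order is the
`p`-free part of `d`, so `p` divides every integer in the ideal. In all other cases the ideal is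
the unit ideal: a common root in a residue field of `ℤ[X]` would be a primitive root of unity of
order both `m` and `n` in characteristic `0`, and of order the `p`-free part of both `m` and `n` in
characteristic `p`, which makes `m` and `n` differ by a factor `p ^ t`.
-/

open Polynomial Finset

namespace Polynomial

theorem cyclotomic_dvd_geom_sum_X_pow_sub_natCast {R : Type*} [CommRing R] {d r : ℕ} (hdr : d ∣ r)
    (k : ℕ) : cyclotomic d R ∣ ∑ i ∈ range k, (X ^ r : R[X]) ^ i - k := by
  have hsum : ∑ i ∈ range k, (X ^ r : R[X]) ^ i - k = ∑ i ∈ range k, ((X ^ r : R[X]) ^ i - 1) := by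
    simp
  rw [hsum]
  refine dvd_sum fun i _ => ?_
  exact (cyclotomic.dvd_X_pow_sub_one d R).trans <|
    (dvd_pow_sub_one_of_dvd hdr).trans (sub_one_dvd_pow_sub_one _ i)

section IsDomain

variable {R : Type*} [CommRing R] [IsDomain R]

theorem cyclotomic_mul_dvd_geom_sum_X_pow {r k : ℕ} (hr : 0 < r) (hk : 1 < k) :
    cyclotomic (r * k) R ∣ ∑ i ∈ range k, (X ^ r : R[X]) ^ i := by
  have hr_mem : r ∈ (r * k).properDivisors :=
    Nat.mem_properDivisors.mpr ⟨dvd_mul_right r k, lt_mul_right hr hk⟩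
  have h := X_pow_sub_one_mul_cyclotomic_dvd_X_pow_sub_one_of_dvd R hr_mem
  have hgeom : (X : R[X]) ^ (r * k) - 1 = (∑ i ∈ range k, (X ^ r : R[X]) ^ i) * (X ^ r - 1) := by
    rw [pow_mul, geom_sum_mul]
  rw [hgeom, mul_comm] at h
  exact (mul_dvd_mul_iff_right (X_pow_sub_C_ne_zero hr 1)).mp (by simpa using h)

theorem natCast_mem_span_cyclotomic {d r k : ℕ} (hdr : d ∣ r) (hr : 0 < r) (hk : 1 < k) :
    (k : R[X]) ∈ Ideal.span {cyclotomic d R, cyclotomic (r * k) R} := by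
  obtain ⟨u, hu⟩ := cyclotomic_mul_dvd_geom_sum_X_pow (R := R) hr hk
  obtain ⟨v, hv⟩ := cyclotomic_dvd_geom_sum_X_pow_sub_natCast (R := R) hdr k
  exact Ideal.mem_span_pair.mpr ⟨-v, u, by linear_combination hv - hu⟩

theorem natCast_mem_span_cyclotomic_mul_prime_pow {d p t : ℕ} (hp : p.Prime) (hd : d ≠ 0)
    (ht : 1 ≤ t) : (p : R[X]) ∈ Ideal.span {cyclotomic d R, cyclotomic (d * p ^ t) R} := by
  have hdt : d * p ^ t = d * p ^ (t - 1) * p := by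
    rw [mul_assoc, ← pow_succ, Nat.sub_add_cancel ht]
  rw [hdt]
  exact natCast_mem_span_cyclotomic (dvd_mul_right d _)
    (Nat.mul_pos (Nat.pos_of_ne_zero hd) (pow_pos hp.pos _)) hp.one_lt

theorem isPrimitiveRoot_ordCompl_of_isRoot_cyclotomic (p : ℕ) [Fact p.Prime] [CharP R p] {n : ℕ}
    (hn : n ≠ 0) {x : R} (hx : (cyclotomic n R).IsRoot x) : IsPrimitiveRoot x (ordCompl[p] n) := by
  have : NeZero ((ordCompl[p] n : ℕ) : R) := NeZero.of_not_dvd R (Nat.not_dvd_ordCompl Fact.out hn)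
  rw [← Nat.ordProj_mul_ordCompl_eq_self n p] at hx
  exact isRoot_cyclotomic_prime_pow_mul_iff_of_charP.mp hx

end IsDomain

theorem aeval_cyclotomic_eq_zero_iff {K : Type*} [CommRing K] {n : ℕ} {x : K} :
    aeval x (cyclotomic n ℤ) = 0 ↔ (cyclotomic n K).IsRoot x := by
  rw [aeval_def, eval₂_eq_eval_map, map_cyclotomic, IsRoot.def]

theorem intCast_dvd_of_C_mem_span_of_aeval_eq_zero {K : Type*} [CommRing K] (p : ℕ) [CharP K p]
    {f g : ℤ[X]} {x : K} (hf : aeval x f = 0) (hg : aeval x g = 0) {j : ℤ}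
    (hj : C j ∈ Ideal.span {f, g}) : (p : ℤ) ∣ j := by
  have hle : Ideal.span {f, g} ≤ RingHom.ker (aeval x) := by
    rw [Ideal.span_le, Set.pair_subset_iff]
    exact ⟨hf, hg⟩
  have hj0 : aeval x (C j) = 0 := hle hj
  rwa [aeval_C, algebraMap_int_eq, eq_intCast, CharP.intCast_eq_zero_iff K p] at hj0

theorem exists_isRoot_cyclotomic_prime_pow_mul (p : ℕ) [Fact p.Prime] {c : ℕ} (hc : ¬p ∣ c) :
    ∃ ζ : AlgebraicClosure (ZMod p), ∀ a, (cyclotomic (p ^ a * c) _).IsRoot ζ := by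
  have : NeZero (c : AlgebraicClosure (ZMod p)) := NeZero.of_not_dvd _ hc
  obtain ⟨ζ, hζ⟩ := HasEnoughRootsOfUnity.exists_primitiveRoot (AlgebraicClosure (ZMod p)) c
  exact ⟨ζ, fun a => isRoot_cyclotomic_prime_pow_mul_iff_of_charP.mpr hζ⟩

theorem prime_dvd_of_C_mem_span_cyclotomic_mul_prime_pow {d p t j : ℕ} (hp : p.Prime)
    (hd : d ≠ 0) (hj : C (j : ℤ) ∈ Ideal.span {cyclotomic d ℤ, cyclotomic (d * p ^ t) ℤ}) :
    p ∣ j := by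
  have : Fact p.Prime := ⟨hp⟩
  obtain ⟨ζ, hζ⟩ := exists_isRoot_cyclotomic_prime_pow_mul p (Nat.not_dvd_ordCompl hp hd)
  have hd_eq : d = p ^ d.factorization p * ordCompl[p] d :=
    (Nat.ordProj_mul_ordCompl_eq_self d p).symm
  have hdt_eq : d * p ^ t = p ^ (d.factorization p + t) * ordCompl[p] d := by
    conv_lhs => rw [hd_eq]
    ring
  have h1 : aeval ζ (cyclotomic d ℤ) = 0 := aeval_cyclotomic_eq_zero_iff.mpr (hd_eq ▸ hζ _)
  have h2 : aeval ζ (cyclotomic (d * p ^ t) ℤ) = 0 :=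
    aeval_cyclotomic_eq_zero_iff.mpr (hdt_eq ▸ hζ _)
  exact_mod_cast intCast_dvd_of_C_mem_span_of_aeval_eq_zero p h1 h2 hj

theorem aeval_mk_X_eq_zero_of_mem {R : Type*} [CommRing R] {I : Ideal R[X]} {f : R[X]}
    (hf : f ∈ I) : aeval (Ideal.Quotient.mk I X) f = 0 := by
  rw [← Ideal.Quotient.mkₐ_eq_mk R, aeval_algHom_apply, aeval_X_left_apply,
    Ideal.Quotient.mkₐ_eq_mk, Ideal.Quotient.eq_zero_iff_mem]
  exact hf

end Polynomial

theorem Nat.exists_eq_mul_prime_pow_of_ordCompl_eq {p m n : ℕ} (hmn : m ≠ n)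
    (h : ordCompl[p] m = ordCompl[p] n) :
    ∃ d t, 1 ≤ t ∧ ((m = d ∧ n = d * p ^ t) ∨ (n = d ∧ m = d * p ^ t)) := by
  have hm_eq := Nat.ordProj_mul_ordCompl_eq_self m p
  have hn_eq := Nat.ordProj_mul_ordCompl_eq_self n p
  rw [← h] at hn_eq
  set a := m.factorization p
  set b := n.factorization p
  rcases lt_trichotomy a b with hab | hab | hab
  · refine ⟨m, b - a, by omega, Or.inl ⟨rfl, ?_⟩⟩
    rw [← hm_eq, ← hn_eq, mul_right_comm, ← pow_add, Nat.add_sub_cancel' hab.le]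
  · exact absurd (hm_eq.symm.trans (hab ▸ hn_eq)) hmn
  · refine ⟨n, a - b, by omega, Or.inr ⟨rfl, ?_⟩⟩
    rw [← hm_eq, ← hn_eq, mul_right_comm, ← pow_add, Nat.add_sub_cancel' hab.le]

theorem exists_prime_pow_mul_of_span_cyclotomic_ne_top {m n : ℕ} (hm : m ≠ 0) (hn : n ≠ 0)
    (hmn : m ≠ n) (h : Ideal.span {cyclotomic m ℤ, cyclotomic n ℤ} ≠ ⊤) :
    ∃ d p t, p.Prime ∧ 1 ≤ t ∧ ((m = d ∧ n = d * p ^ t) ∨ (n = d ∧ m = d * p ^ t)) := by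
  obtain ⟨M, hM, hle⟩ := Ideal.exists_le_maximal _ h
  have : M.IsPrime := hM.isPrime
  set α : ℤ[X] ⧸ M := Ideal.Quotient.mk M X
  have hαm : (cyclotomic m (ℤ[X] ⧸ M)).IsRoot α := aeval_cyclotomic_eq_zero_iff.mp <|
    aeval_mk_X_eq_zero_of_mem (hle (Ideal.subset_span (Set.mem_insert _ _)))
  have hαn : (cyclotomic n (ℤ[X] ⧸ M)).IsRoot α := aeval_cyclotomic_eq_zero_iff.mp <|
    aeval_mk_X_eq_zero_of_mem (hle (Ideal.subset_span (Set.mem_insert_of_mem _ rfl)))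
  obtain ⟨p, hchar⟩ := CharP.exists (ℤ[X] ⧸ M)
  rcases CharP.char_is_prime_or_zero (ℤ[X] ⧸ M) p with hp | rfl
  · have : Fact p.Prime := ⟨hp⟩
    have hcompl := (isPrimitiveRoot_ordCompl_of_isRoot_cyclotomic p hm hαm).unique
      (isPrimitiveRoot_ordCompl_of_isRoot_cyclotomic p hn hαn)
    obtain ⟨d, t, ht, hrep⟩ := Nat.exists_eq_mul_prime_pow_of_ordCompl_eq hmn hcompl
    exact ⟨d, p, t, hp, ht, hrep⟩
  · have : CharZero (ℤ[X] ⧸ M) := CharP.charP_to_charZero _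
    have : NeZero (m : ℤ[X] ⧸ M) := ⟨Nat.cast_ne_zero.mpr hm⟩
    have : NeZero (n : ℤ[X] ⧸ M) := ⟨Nat.cast_ne_zero.mpr hn⟩
    exact absurd ((isRoot_cyclotomic_iff.mp hαm).unique (isRoot_cyclotomic_iff.mp hαn)) hmn

theorem span_cyclotomic_eq_of_eq_mul {R : Type*} [CommRing R] {m n d e : ℕ}
    (h : (m = d ∧ n = d * e) ∨ (n = d ∧ m = d * e)) :
    Ideal.span {cyclotomic m R, cyclotomic n R} =
      Ideal.span {cyclotomic d R, cyclotomic (d * e) R} := by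
  rcases h with ⟨rfl, rfl⟩ | ⟨rfl, rfl⟩
  · rfl
  · exact Ideal.span_pair_comm

theorem cyclotomic_ideal_min_nat (m n : ℕ) (hm : 0 < m) (hn : 0 < n) (hmn : m ≠ n) :
    ∃ k : ℕ, 0 < k ∧
      C (k : ℤ) ∈ Ideal.span {cyclotomic m ℤ, cyclotomic n ℤ} ∧
      (∀ j : ℕ, 0 < j → C (j : ℤ) ∈ Ideal.span {cyclotomic m ℤ, cyclotomic n ℤ} → k ≤ j) ∧
      (∀ d p t : ℕ, p.Prime → 1 ≤ t →
        ((m = d ∧ n = d * p ^ t) ∨ (n = d ∧ m = d * p ^ t)) → k = p) ∧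
      ((¬ ∃ d p t : ℕ, p.Prime ∧ 1 ≤ t ∧
        ((m = d ∧ n = d * p ^ t) ∨ (n = d ∧ m = d * p ^ t))) → k = 1) := by
  by_cases h : ∃ d p t : ℕ, p.Prime ∧ 1 ≤ t ∧
      ((m = d ∧ n = d * p ^ t) ∨ (n = d ∧ m = d * p ^ t))
  · obtain ⟨d, p, t, hp, ht, hrep⟩ := h
    have hd_ne : ∀ {d e : ℕ}, ((m = d ∧ n = d * e) ∨ (n = d ∧ m = d * e)) → d ≠ 0 := by
      rintro d e (⟨rfl, _⟩ | ⟨rfl, _⟩) <;> omega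
    have hdvd : ∀ {d q t j : ℕ}, q.Prime → ((m = d ∧ n = d * q ^ t) ∨ (n = d ∧ m = d * q ^ t)) →
        C (j : ℤ) ∈ Ideal.span {cyclotomic m ℤ, cyclotomic n ℤ} → q ∣ j := by
      intro d q t j hq hrep hj
      rw [span_cyclotomic_eq_of_eq_mul hrep] at hj
      exact prime_dvd_of_C_mem_span_cyclotomic_mul_prime_pow hq (hd_ne hrep) hj
    have hp_mem : C (p : ℤ) ∈ Ideal.span {cyclotomic m ℤ, cyclotomic n ℤ} := by
      rw [span_cyclotomic_eq_of_eq_mul hrep, map_natCast]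
      exact natCast_mem_span_cyclotomic_mul_prime_pow hp (hd_ne hrep) ht
    exact ⟨p, hp.pos, hp_mem, fun j hj hmem => Nat.le_of_dvd hj (hdvd hp hrep hmem),
      fun _ q _ hq _ hrep' => ((Nat.prime_dvd_prime_iff_eq hq hp).mp (hdvd hq hrep' hp_mem)).symm,
      fun h => absurd ⟨d, p, t, hp, ht, hrep⟩ h⟩
  · have htop : Ideal.span {cyclotomic m ℤ, cyclotomic n ℤ} = ⊤ := by
      by_contra hne
      exact h (exists_prime_pow_mul_of_span_cyclotomic_ne_top hm.ne' hn.ne' hmn hne)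
    exact ⟨1, one_pos, by simp [htop], fun j hj _ => hj,
      fun d p t hp ht hrep => absurd ⟨d, p, t, hp, ht, hrep⟩ h, fun _ => rfl⟩
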